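/- arXiv:2108.03367 — 3 statements merged into one kernel-verified Lean document; each statement's English description precedes it below -/
import Mathlib

section
/- Let n ∈ ℤ, let ρ_n, ρ_n', ρ_n'' be the three roots of f_n(X) ordered so that ρ_n' = −1/(1+ρ_n) and ρ_n'' = −1/(1+ρ_n'), and let r₁, r₂, r₃ ∈ ℚ. Set η = r₁ρ_n + r₂ρ_n' + r₃, η' = r₁ρ_n' + r₂ρ_n'' + r₃, η'' = r₁ρ_n'' + r₂ρ_n + r₃. Then: (1) η + η' + η'' = n(r₁+r₂) + 3r₃; (2) ηη' + η'η'' + η''η = r₁r₂n² + 2(r₁+r₂)r₃n − (r₁² − r₁r₂ + r₂²)(n+3) + 3r₃²; (3) ηη'η'' = r₁r₂r₃n² − r₁²r₂n(n+3) + (r₁+r₂)r₃²n − (r₁² − r₁r₂ + r₂²)r₃(n+3) + r₁r₂(r₁−r₂)(n²+3n+6) + r₁³ + r₂³ + r₃³ − 3r₁²r₂. -/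
/-!
The map `x ↦ -1/(1+x)` has order three and permutes the roots `ρ ↦ ρ' ↦ ρ'' ↦ ρ` of `f_n`.
Written as `x y = -1 - y`, it reduces every cyclic sum of monomials of degree at most three in
the roots to a polynomial in the trace `n`: `Σ ρρ' = -(n + 3)`, `Σ ρ² = n² + 2n + 6`,
`Σ ρ²ρ' = 3`, `Σ ρρ'² = -(n² + 3n + 6)` and `ρρ'ρ'' = 1`. Since `η ↦ η' ↦ η''` is the same
cyclic shift, the elementary symmetric functions of `η, η', η''` are cyclic sums of this kind.
-/

/-- `a ↦ b ↦ c ↦ a` is an orbit of `x ↦ -1/(1+x)`, encoded division-free: `y = -1/(1+x)` becomes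
`x * y = -1 - y`. -/
structure IsShanksTriple {R : Type*} [CommRing R] (t a b c : R) : Prop where
  add_add : a + b + c = t
  mul_ab : a * b = -1 - b
  mul_bc : b * c = -1 - c
  mul_ca : c * a = -1 - a

namespace IsShanksTriple

variable {R : Type*} [CommRing R] {t a b c : R}

theorem mul_add_mul_add_mul (h : IsShanksTriple t a b c) : a * b + b * c + c * a = -(t + 3) := by
  linear_combination h.mul_ab + h.mul_bc + h.mul_ca - h.add_add

theorem sq_add_sq_add_sq (h : IsShanksTriple t a b c) :
    a ^ 2 + b ^ 2 + c ^ 2 = t ^ 2 + 2 * t + 6 := by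
  linear_combination (a + b + c + t) * h.add_add - 2 * h.mul_add_mul_add_mul

theorem mul_mul (h : IsShanksTriple t a b c) : a * b * c = 1 := by
  linear_combination c * h.mul_ab - h.mul_bc

theorem sq_mul_add_sq_mul_add_sq_mul (h : IsShanksTriple t a b c) :
    a ^ 2 * b + b ^ 2 * c + c ^ 2 * a = 3 := by
  linear_combination a * h.mul_ab + b * h.mul_bc + c * h.mul_ca - h.add_add
    - h.mul_add_mul_add_mul

theorem mul_sq_add_mul_sq_add_mul_sq (h : IsShanksTriple t a b c) :
    a * b ^ 2 + b * c ^ 2 + c * a ^ 2 = -(t ^ 2 + 3 * t + 6) := by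
  linear_combination b * h.mul_ab + c * h.mul_bc + a * h.mul_ca - h.add_add - h.sq_add_sq_add_sq

variable (r₁ r₂ r₃ : R)

theorem trace_eq (h : IsShanksTriple t a b c) :
    (r₁ * a + r₂ * b + r₃) + (r₁ * b + r₂ * c + r₃) + (r₁ * c + r₂ * a + r₃)
      = t * (r₁ + r₂) + 3 * r₃ := by
  linear_combination (r₁ + r₂) * h.add_add

theorem secondSymm_eq (h : IsShanksTriple t a b c) :
    (r₁ * a + r₂ * b + r₃) * (r₁ * b + r₂ * c + r₃)
        + (r₁ * b + r₂ * c + r₃) * (r₁ * c + r₂ * a + r₃)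
        + (r₁ * c + r₂ * a + r₃) * (r₁ * a + r₂ * b + r₃)
      = r₁ * r₂ * t ^ 2 + 2 * (r₁ + r₂) * r₃ * t
        - (r₁ ^ 2 - r₁ * r₂ + r₂ ^ 2) * (t + 3) + 3 * r₃ ^ 2 := by
  linear_combination (r₁ ^ 2 + r₁ * r₂ + r₂ ^ 2) * h.mul_add_mul_add_mul
    + r₁ * r₂ * h.sq_add_sq_add_sq + 2 * (r₁ + r₂) * r₃ * h.add_add

theorem norm_eq (h : IsShanksTriple t a b c) :
    (r₁ * a + r₂ * b + r₃) * (r₁ * b + r₂ * c + r₃) * (r₁ * c + r₂ * a + r₃)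
      = r₁ * r₂ * r₃ * t ^ 2 - r₁ ^ 2 * r₂ * t * (t + 3)
        + (r₁ + r₂) * r₃ ^ 2 * t - (r₁ ^ 2 - r₁ * r₂ + r₂ ^ 2) * r₃ * (t + 3)
        + r₁ * r₂ * (r₁ - r₂) * (t ^ 2 + 3 * t + 6)
        + r₁ ^ 3 + r₂ ^ 3 + r₃ ^ 3 - 3 * r₁ ^ 2 * r₂ := by
  linear_combination (r₁ ^ 3 + r₂ ^ 3) * h.mul_mul + r₁ ^ 2 * r₂ * h.sq_mul_add_sq_mul_add_sq_mul
    + r₁ * r₂ ^ 2 * h.mul_sq_add_mul_sq_add_mul_sq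
    + r₃ * (r₁ ^ 2 + r₁ * r₂ + r₂ ^ 2) * h.mul_add_mul_add_mul
    + r₃ * r₁ * r₂ * h.sq_add_sq_add_sq + r₃ ^ 2 * (r₁ + r₂) * h.add_add

end IsShanksTriple

theorem eq_neg_one_div_one_add {K : Type*} [Field K] {x y : K} (h : y * (1 + x) = -1) :
    y = -1 / (1 + x) :=
  eq_div_of_mul_eq (right_ne_zero_of_mul (h ▸ neg_ne_zero.mpr one_ne_zero)) h

theorem IsShanksTriple.of_shanks_root {K : Type*} [Field K] {n ρ ρ' ρ'' : K}
    (hρ : ρ ^ 3 - n * ρ ^ 2 - (n + 3) * ρ - 1 = 0)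
    (hρ' : ρ' = -1 / (1 + ρ)) (hρ'' : ρ'' = -1 / (1 + ρ')) :
    IsShanksTriple n ρ ρ' ρ'' := by
  have hb : (ρ ^ 2 - (n + 1) * ρ - 2) * (1 + ρ) = -1 := by linear_combination hρ
  obtain rfl := hρ'.trans (eq_neg_one_div_one_add hb).symm
  have hc : (-ρ ^ 2 + n * ρ + n + 2) * (1 + (ρ ^ 2 - (n + 1) * ρ - 2)) = -1 := by
    linear_combination (n + 1 - ρ) * hρ
  obtain rfl := hρ''.trans (eq_neg_one_div_one_add hc).symm
  exact ⟨by ring, by linear_combination hb, by linear_combination hc, by linear_combination -hρ⟩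

/-- Trace, second symmetric function and norm of `η = r₁ρ + r₂ρ' + r₃`, where
`ρ, ρ' = -1/(1+ρ), ρ'' = -1/(1+ρ')` are the three roots of the Shanks cubic
polynomial `f_n(X) = X³ - nX² - (n+3)X - 1` and `r₁, r₂, r₃ ∈ ℚ`. -/
theorem stmt5 (n : ℤ) (ρ ρ' ρ'' : ℂ)
    (hρ : ρ ^ 3 - n * ρ ^ 2 - (n + 3) * ρ - 1 = 0)
    (hρ' : ρ' = -1 / (1 + ρ)) (hρ'' : ρ'' = -1 / (1 + ρ'))
    (r₁ r₂ r₃ : ℚ) (η η' η'' : ℂ)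
    (hη : η = r₁ * ρ + r₂ * ρ' + r₃)
    (hη' : η' = r₁ * ρ' + r₂ * ρ'' + r₃)
    (hη'' : η'' = r₁ * ρ'' + r₂ * ρ + r₃) :
    η + η' + η'' = n * (r₁ + r₂) + 3 * r₃ ∧
    η * η' + η' * η'' + η'' * η =
      r₁ * r₂ * (n : ℂ) ^ 2 + 2 * (r₁ + r₂) * r₃ * n
        - (r₁ ^ 2 - r₁ * r₂ + r₂ ^ 2) * (n + 3) + 3 * (r₃ : ℂ) ^ 2 ∧
    η * η' * η'' =
      r₁ * r₂ * r₃ * (n : ℂ) ^ 2 - (r₁ : ℂ) ^ 2 * r₂ * n * (n + 3)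
        + (r₁ + r₂) * (r₃ : ℂ) ^ 2 * n - (r₁ ^ 2 - r₁ * r₂ + r₂ ^ 2) * r₃ * (n + 3)
        + r₁ * r₂ * (r₁ - r₂) * ((n : ℂ) ^ 2 + 3 * n + 6)
        + (r₁ : ℂ) ^ 3 + (r₂ : ℂ) ^ 3 + (r₃ : ℂ) ^ 3 - 3 * (r₁ : ℂ) ^ 2 * r₂ := by
  have h := IsShanksTriple.of_shanks_root hρ hρ' hρ''
  subst hη hη' hη''
  exact ⟨h.trace_eq _ _ _, h.secondSymm_eq _ _ _, h.norm_eq _ _ _⟩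
end

section
/- Let n ∈ ℤ and let s be a positive integer with s ∣ Δ_n. Then there exist exactly 6 ordered pairs (a₀, a₁) of integers satisfying s = a₀² − a₀a₁ + a₁² and (a₀ + a₁ζ) ∣ A_n in ℤ[ζ]. Moreover, if (a₀, a₁) is one such pair, then the set of all such pairs is {(a₀, a₁), (−a₀, −a₁), (a₁, −(a₀−a₁)), (−a₁, a₀−a₁), (a₀−a₁, a₀), (−(a₀−a₁), −a₀)}. -/
/-!
Write `A_n = (n + 3) + 3ω` in the Euclidean domain `ℤ[ω]`, normed by `x² - xy + y²`. A rational
integer dividing `A_n` divides `3`, and `3 = (1 - ω)(1 - ω̄)` is not prime, while the prime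
`1 - ω` above `3` is associated to its conjugate.

Existence: for a prime `q ∣ s`, some prime factor `π` of `q` divides `A_n` (or `Ā_n`, then
conjugate). Its norm is `q`: were it `q²`, then `q ~ π` would be a prime of `ℤ[ω]` dividing
`A_n`, so `q = 3`. Dividing out `π` and inducting builds a divisor of norm `s`.

Uniqueness up to units: if `p, q ∣ A_n` have equal norm and `π ∣ p` is prime, then
`π ∣ N(q) = q q̄`. If `π ∤ q` then `π̄ ∣ q`, so `π π̄ = N(π)` divides `A_n` unless `π ~ π̄`;
then `N(π) = 3` and `π ~ 1 - ω ~ π̄` anyway. Cancelling `π` and inducting gives `p ~ q`, and the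
six units of `ℤ[ω]` produce the six pairs.
-/

theorem two_mul_abs_sub_mul_ediv_le (z : ℤ) {N : ℤ} (hN : 0 < N) :
    2 * |z - N * ((2 * z + N) / (2 * N))| ≤ N := by
  have h := Int.mul_ediv_add_emod (2 * z + N) (2 * N)
  have h0 := Int.emod_nonneg (2 * z + N) (by omega : 2 * N ≠ 0)
  have h1 := Int.emod_lt_of_pos (2 * z + N) (by omega : 0 < 2 * N)
  cases abs_cases (z - N * ((2 * z + N) / (2 * N))) <;> linarith

theorem four_mul_sq_sub_mul_add_sq_lt {u v N : ℤ} (hN : 0 < N) (hu : 2 * |u| ≤ N)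
    (hv : 2 * |v| ≤ N) : 4 * (u ^ 2 - u * v + v ^ 2) < 4 * N ^ 2 := by
  cases abs_cases u <;> cases abs_cases v <;> nlinarith

/-- `⟨x, y⟩` stands for `x + y ω`, where `ω² + ω + 1 = 0`. -/
@[ext]
structure EisensteinInt where
  x : ℤ
  y : ℤ
  deriving DecidableEq

namespace EisensteinInt

instance : Zero EisensteinInt := ⟨⟨0, 0⟩⟩
instance : One EisensteinInt := ⟨⟨1, 0⟩⟩
instance : Add EisensteinInt := ⟨fun p q => ⟨p.x + q.x, p.y + q.y⟩⟩
instance : Neg EisensteinInt := ⟨fun p => ⟨-p.x, -p.y⟩⟩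
instance : Sub EisensteinInt := ⟨fun p q => ⟨p.x - q.x, p.y - q.y⟩⟩
instance : Mul EisensteinInt :=
  ⟨fun p q => ⟨p.x * q.x - p.y * q.y, p.x * q.y + p.y * q.x - p.y * q.y⟩⟩
instance : IntCast EisensteinInt := ⟨fun m => ⟨m, 0⟩⟩
instance : NatCast EisensteinInt := ⟨fun m => ⟨m, 0⟩⟩

@[simp] theorem zero_x : (0 : EisensteinInt).x = 0 := rfl
@[simp] theorem zero_y : (0 : EisensteinInt).y = 0 := rfl
@[simp] theorem one_x : (1 : EisensteinInt).x = 1 := rfl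
@[simp] theorem one_y : (1 : EisensteinInt).y = 0 := rfl
@[simp] theorem add_x (p q : EisensteinInt) : (p + q).x = p.x + q.x := rfl
@[simp] theorem add_y (p q : EisensteinInt) : (p + q).y = p.y + q.y := rfl
@[simp] theorem neg_x (p : EisensteinInt) : (-p).x = -p.x := rfl
@[simp] theorem neg_y (p : EisensteinInt) : (-p).y = -p.y := rfl
@[simp] theorem sub_x (p q : EisensteinInt) : (p - q).x = p.x - q.x := rfl
@[simp] theorem sub_y (p q : EisensteinInt) : (p - q).y = p.y - q.y := rfl
@[simp] theorem mul_x (p q : EisensteinInt) : (p * q).x = p.x * q.x - p.y * q.y := rfl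
@[simp] theorem mul_y (p q : EisensteinInt) :
    (p * q).y = p.x * q.y + p.y * q.x - p.y * q.y := rfl
@[simp] theorem intCast_x (m : ℤ) : (m : EisensteinInt).x = m := rfl
@[simp] theorem intCast_y (m : ℤ) : (m : EisensteinInt).y = 0 := rfl
@[simp] theorem natCast_x (m : ℕ) : (m : EisensteinInt).x = m := rfl
@[simp] theorem natCast_y (m : ℕ) : (m : EisensteinInt).y = 0 := rfl

instance : CommRing EisensteinInt where
  nsmul := nsmulRec
  zsmul := zsmulRec
  npow := npowRec
  add_assoc _ _ _ := by ext <;> simp [add_assoc]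
  zero_add _ := by ext <;> simp
  add_zero _ := by ext <;> simp
  add_comm _ _ := by ext <;> simp [add_comm]
  neg_add_cancel _ := by ext <;> simp
  sub_eq_add_neg _ _ := by ext <;> simp [sub_eq_add_neg]
  mul_assoc _ _ _ := by ext <;> simp <;> ring
  one_mul _ := by ext <;> simp
  mul_one _ := by ext <;> simp
  zero_mul _ := by ext <;> simp
  mul_zero _ := by ext <;> simp
  left_distrib _ _ _ := by ext <;> simp <;> ring
  right_distrib _ _ _ := by ext <;> simp <;> ring
  mul_comm _ _ := by ext <;> simp <;> ring
  natCast_zero := by ext <;> simp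
  natCast_succ _ := by ext <;> simp
  intCast_ofNat _ := by ext <;> simp
  intCast_negSucc _ := by ext <;> simp [Int.negSucc_eq]

instance : Nontrivial EisensteinInt := ⟨⟨0, 1, by simp [EisensteinInt.ext_iff]⟩⟩

@[simp] theorem ofNat_x (m : ℕ) [m.AtLeastTwo] :
    (no_index (OfNat.ofNat m) : EisensteinInt).x = OfNat.ofNat m := rfl
@[simp] theorem ofNat_y (m : ℕ) [m.AtLeastTwo] :
    (no_index (OfNat.ofNat m) : EisensteinInt).y = 0 := rfl

def conj : EisensteinInt ≃+* EisensteinInt where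
  toFun p := ⟨p.x - p.y, -p.y⟩
  invFun p := ⟨p.x - p.y, -p.y⟩
  left_inv _ := by ext <;> simp
  right_inv _ := by ext <;> simp
  map_mul' _ _ := by ext <;> simp <;> ring
  map_add' _ _ := by ext <;> simp <;> ring

@[simp] theorem conj_x (p : EisensteinInt) : (conj p).x = p.x - p.y := rfl
@[simp] theorem conj_y (p : EisensteinInt) : (conj p).y = -p.y := rfl
@[simp] theorem conj_conj (p : EisensteinInt) : conj (conj p) = p := conj.left_inv p

def norm (p : EisensteinInt) : ℤ := p.x ^ 2 - p.x * p.y + p.y ^ 2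

theorem mul_conj (p : EisensteinInt) : p * conj p = norm p := by
  ext <;> simp only [norm, mul_x, mul_y, conj_x, conj_y, intCast_x, intCast_y] <;> ring

theorem norm_mul (p q : EisensteinInt) : norm (p * q) = norm p * norm q := by
  simp only [norm, mul_x, mul_y]; ring

@[simp] theorem norm_conj (p : EisensteinInt) : norm (conj p) = norm p := by
  simp only [norm, conj_x, conj_y]; ring

@[simp] theorem norm_one : norm 1 = 1 := rfl

@[simp] theorem norm_intCast (m : ℤ) : norm m = m ^ 2 := by simp [norm]

theorem four_mul_norm (p : EisensteinInt) : 4 * norm p = (2 * p.x - p.y) ^ 2 + 3 * p.y ^ 2 := by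
  simp only [norm]; ring

theorem norm_nonneg (p : EisensteinInt) : 0 ≤ norm p := by
  nlinarith [four_mul_norm p, sq_nonneg (2 * p.x - p.y), sq_nonneg p.y]

@[simp] theorem norm_eq_zero {p : EisensteinInt} : norm p = 0 ↔ p = 0 := by
  refine ⟨fun h => ?_, fun h => h ▸ rfl⟩
  have hy : p.y = 0 := by nlinarith [four_mul_norm p, sq_nonneg (2 * p.x - p.y), sq_nonneg p.y]
  have hx : p.x = 0 := by nlinarith [four_mul_norm p, sq_nonneg (2 * p.x - p.y)]
  ext <;> simp [hx, hy]

theorem norm_pos {p : EisensteinInt} : 0 < norm p ↔ p ≠ 0 := by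
  rw [(norm_nonneg p).lt_iff_ne', Ne, norm_eq_zero]

theorem intCast_dvd_iff {m : ℤ} {p : EisensteinInt} :
    (m : EisensteinInt) ∣ p ↔ m ∣ p.x ∧ m ∣ p.y := by
  constructor
  · rintro ⟨r, rfl⟩
    simp
  · rintro ⟨⟨a, ha⟩, ⟨b, hb⟩⟩
    exact ⟨⟨a, b⟩, by ext <;> simp [ha, hb]⟩

theorem norm_dvd_norm {p q : EisensteinInt} (h : p ∣ q) : norm p ∣ norm q := by
  obtain ⟨r, rfl⟩ := h
  exact ⟨norm r, norm_mul p r⟩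

theorem isUnit_iff_norm_eq_one {u : EisensteinInt} : IsUnit u ↔ norm u = 1 := by
  refine ⟨fun h => ?_, fun h => .of_mul_eq_one (conj u) (by rw [mul_conj, h, Int.cast_one])⟩
  obtain ⟨v, hv⟩ : u ∣ 1 := h.dvd
  exact Int.eq_one_of_mul_eq_one_right (norm_nonneg u) (by rw [← norm_mul, ← hv, norm_one])

theorem norm_eq_of_associated {p q : EisensteinInt} (h : Associated p q) : norm p = norm q := by
  obtain ⟨u, rfl⟩ := h
  rw [norm_mul, isUnit_iff_norm_eq_one.mp u.isUnit, mul_one]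

/-- `(2 * z + N) / (2 * N)` is `z / N` rounded to a nearest integer: this rounds
`p * conj q / norm q` coordinatewise. -/
def quotient (p q : EisensteinInt) : EisensteinInt :=
  ⟨(2 * (p * conj q).x + norm q) / (2 * norm q), (2 * (p * conj q).y + norm q) / (2 * norm q)⟩

theorem norm_sub_mul_quotient_lt (p : EisensteinInt) {q : EisensteinInt} (hq : q ≠ 0) :
    norm (p - q * quotient p q) < norm q := by
  have hN := norm_pos.mpr hq
  set c := quotient p q
  set r := p * conj q - norm q * c
  have hr : (p - q * c) * conj q = r := by
    rw [sub_mul, mul_right_comm, mul_conj]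
  have key : norm (p - q * c) * norm q = norm r := by rw [← norm_conj q, ← norm_mul, hr]
  have hrN : 4 * norm r < 4 * norm q ^ 2 := four_mul_sq_sub_mul_add_sq_lt hN
    (by simpa [r, c, quotient] using two_mul_abs_sub_mul_ediv_le (p * conj q).x hN)
    (by simpa [r, c, quotient] using two_mul_abs_sub_mul_ediv_le (p * conj q).y hN)
  nlinarith

instance : EuclideanDomain EisensteinInt where
  quotient := quotient
  quotient_zero p := by ext <;> simp [quotient, norm]
  remainder p q := p - q * quotient p q
  quotient_mul_add_remainder_eq _ _ := add_sub_cancel _ _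
  r := InvImage (· < ·) fun p => (norm p).natAbs
  r_wellFounded := (measure fun p => (norm p).natAbs).wf
  remainder_lt p q hq := by
    have := norm_sub_mul_quotient_lt p hq
    have := norm_nonneg (p - q * quotient p q)
    show (norm _).natAbs < (norm q).natAbs
    omega
  mul_left_not_lt p q hq := by
    have := norm_nonneg p
    have : norm p ≤ norm (p * q) := by
      rw [norm_mul]; exact le_mul_of_one_le_right this (norm_pos.mpr hq)
    show ¬(norm (p * q)).natAbs < (norm p).natAbs
    omega

def ω : EisensteinInt := ⟨0, 1⟩

theorem associated_of_dvd_of_norm_eq {p q : EisensteinInt} (h : p ∣ q) (hpq : norm p = norm q)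
    (hq : q ≠ 0) : Associated p q := by
  obtain ⟨e, rfl⟩ := h
  have hp : norm p ≠ 0 := by simpa using left_ne_zero_of_mul hq
  have he : norm e = 1 := by
    rw [norm_mul] at hpq
    exact (mul_eq_left₀ hp).mp hpq.symm
  exact associated_mul_unit_right p e (isUnit_iff_norm_eq_one.mpr he)

theorem associated_conj_one_sub_ω : Associated (conj (1 - ω)) (1 - ω) :=
  (associated_of_dvd_of_norm_eq ⟨1 + ω, by ext <;> simp [ω]⟩ (norm_conj _).symm (by decide)).symm

theorem associated_one_sub_ω_of_norm_eq_three {π : EisensteinInt} (hπ : Prime π)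
    (h3 : norm π = 3) : Associated π (1 - ω) := by
  have hdvd : π ∣ (1 - ω) * conj (1 - ω) := ⟨conj π, by rw [mul_conj, mul_conj, h3]; rfl⟩
  rcases hπ.dvd_or_dvd hdvd with h | h
  · exact associated_of_dvd_of_norm_eq h (by rw [h3]; rfl) (by decide)
  · exact (associated_of_dvd_of_norm_eq h (by rw [h3]; rfl) (by decide)).trans
      associated_conj_one_sub_ω

theorem dvd_conj_of_norm_eq_three {π : EisensteinInt} (hπ : Prime π) (h3 : norm π = 3) :
    π ∣ conj π :=
  ((associated_one_sub_ω_of_norm_eq_three hπ h3).trans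
    (associated_one_sub_ω_of_norm_eq_three ((MulEquiv.prime_iff conj).mpr hπ)
      (by rw [norm_conj, h3])).symm).dvd

theorem not_prime_three : ¬Prime (3 : EisensteinInt) := by
  intro h
  have h3 : (3 : EisensteinInt) = (1 - ω) * conj (1 - ω) := by rw [mul_conj]; rfl
  rcases h.dvd_or_dvd h3.dvd with h | h <;>
  · have := norm_dvd_norm h
    norm_num [norm, ω] at this

theorem eq_of_norm_eq_one {u : EisensteinInt} (h : norm u = 1) :
    u = 1 ∨ u = -1 ∨ u = -ω ∨ u = ω ∨ u = 1 + ω ∨ u = -(1 + ω) := by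
  obtain ⟨a, b⟩ := u
  simp only [norm] at h
  have hb1 : -1 ≤ b := by nlinarith [sq_nonneg (2 * a - b), sq_nonneg b]
  have hb2 : b ≤ 1 := by nlinarith [sq_nonneg (2 * a - b), sq_nonneg b]
  have ha1 : -1 ≤ a := by nlinarith [sq_nonneg (a - 2 * b), sq_nonneg a]
  have ha2 : a ≤ 1 := by nlinarith [sq_nonneg (a - 2 * b), sq_nonneg a]
  simp only [EisensteinInt.ext_iff, ω, one_x, one_y, neg_x, neg_y, add_x, add_y]
  interval_cases a <;> interval_cases b <;> omega

theorem norm_eq_three_of_dvd_three {π : EisensteinInt} (hπ : Prime π) (h : norm π ∣ 3) :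
    norm π = 3 := by
  have hpos : 0 < norm π := norm_pos.mpr hπ.ne_zero
  have hne : norm π ≠ 1 := fun h1 => hπ.not_isUnit (isUnit_iff_norm_eq_one.mpr h1)
  have hle : norm π ≤ 3 := Int.le_of_dvd (by norm_num) h
  interval_cases h' : norm π <;> simp_all

theorem prime_dvd_conj_of_dvd {A π : EisensteinInt} (hA : ∀ m : ℤ, (m : EisensteinInt) ∣ A → m ∣ 3)
    (hπ : Prime π) (hπA : π ∣ A) (hπA' : conj π ∣ A) : π ∣ conj π := by
  by_contra hnd
  have hdvd : (norm π : EisensteinInt) ∣ A :=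
    mul_conj π ▸ (hπ.irreducible.coprime_iff_not_dvd.mpr hnd).mul_dvd hπA hπA'
  exact hnd (dvd_conj_of_norm_eq_three hπ (norm_eq_three_of_dvd_three hπ (hA _ hdvd)))

theorem prime_dvd_of_dvd_norm {A π q : EisensteinInt}
    (hA : ∀ m : ℤ, (m : EisensteinInt) ∣ A → m ∣ 3) (hπ : Prime π) (hπA : π ∣ A) (hqA : q ∣ A)
    (h : π ∣ (norm q : EisensteinInt)) : π ∣ q := by
  rw [← mul_conj] at h
  refine (hπ.dvd_or_dvd h).elim id fun h' => ?_
  have hπq : conj π ∣ q := by simpa using map_dvd conj h'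
  exact (prime_dvd_conj_of_dvd hA hπ hπA (hπq.trans hqA)).trans hπq

theorem associated_of_dvd_of_dvd_of_norm_eq {A p q : EisensteinInt}
    (hA : ∀ m : ℤ, (m : EisensteinInt) ∣ A → m ∣ 3) (hp : p ∣ A) (hq : q ∣ A)
    (h : norm p = norm q) : Associated p q := by
  induction p using UniqueFactorizationMonoid.induction_on_prime generalizing q A with
  | h₁ =>
    rw [norm_eq_zero.mpr rfl, eq_comm, norm_eq_zero] at h
    rw [h]
  | h₂ p hpu =>
    have hqu : IsUnit q := isUnit_iff_norm_eq_one.mpr (h ▸ isUnit_iff_norm_eq_one.mp hpu)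
    exact (associated_one_iff_isUnit.mpr hpu).trans (associated_one_iff_isUnit.mpr hqu).symm
  | h₃ a π _ hπ ih =>
    have hnorm : (norm q : EisensteinInt) = π * (conj π * norm a) := by
      rw [← h, norm_mul, Int.cast_mul, ← mul_conj, mul_assoc]
    obtain ⟨b, rfl⟩ := prime_dvd_of_dvd_norm hA hπ (dvd_of_mul_right_dvd hp) hq ⟨_, hnorm⟩
    obtain ⟨c, rfl⟩ := hp
    have hb : b ∣ a * c := (mul_dvd_mul_iff_left hπ.ne_zero).mp (by rwa [← mul_assoc])
    have hab : norm a = norm b := by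
      rw [norm_mul, norm_mul] at h
      exact mul_left_cancel₀ (norm_pos.mpr hπ.ne_zero).ne' h
    exact (ih (fun m hm => hA m (hm.trans ⟨π, by ring⟩)) (dvd_mul_right a c) hb hab).mul_left π

theorem exists_dvd_norm_eq_prime {A : EisensteinInt}
    (hA : ∀ m : ℤ, (m : EisensteinInt) ∣ A → m ∣ 3) {q : ℕ} (hq : q.Prime)
    (h : (q : ℤ) ∣ norm A) : ∃ π, π ∣ A ∧ norm π = q := by
  have hqz : Prime (q : ℤ) := Nat.prime_iff_prime_int.mp hq
  have hq0 : ((q : ℤ) : EisensteinInt) ≠ 0 := by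
    rw [← norm_pos, norm_intCast]; exact pow_pos (by exact_mod_cast hq.pos) 2
  have hqu : ¬IsUnit ((q : ℤ) : EisensteinInt) := by
    rw [isUnit_iff_norm_eq_one, norm_intCast]
    have : (2 : ℤ) ≤ q := by exact_mod_cast hq.two_le
    nlinarith
  obtain ⟨π₀, hπ₀, hπ₀q⟩ := WfDvdMonoid.exists_irreducible_factor hqu hq0
  have hπ₀A : π₀ ∣ A * conj A := by
    rw [mul_conj]; exact hπ₀q.trans (map_dvd (Int.castRingHom _) h)
  obtain ⟨π, hπ, hπA, hπq⟩ : ∃ π, Prime π ∧ π ∣ A ∧ π ∣ ((q : ℤ) : EisensteinInt) := by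
    rcases hπ₀.prime.dvd_or_dvd hπ₀A with h' | h'
    · exact ⟨π₀, hπ₀.prime, h', hπ₀q⟩
    · exact ⟨conj π₀, (MulEquiv.prime_iff conj).mpr hπ₀.prime, by simpa using map_dvd conj h',
        by simpa using map_dvd conj hπ₀q⟩
  have hnorm : norm π ∣ (q : ℤ) ^ 2 := norm_intCast (q : ℤ) ▸ norm_dvd_norm hπq
  obtain ⟨i, hi, hassoc⟩ := (dvd_prime_pow hqz 2).mp hnorm
  have hπi : norm π = (q : ℤ) ^ i :=
    Int.eq_of_associated_of_nonneg hassoc (norm_nonneg π) (by positivity)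
  interval_cases i
  · exact absurd (isUnit_iff_norm_eq_one.mpr hπi) hπ.not_isUnit
  · exact ⟨π, hπA, by simpa using hπi⟩
  · have hπq' : Associated π ((q : ℤ) : EisensteinInt) :=
      associated_of_dvd_of_norm_eq hπq (by rw [hπi, norm_intCast]) hq0
    have hq3 : q = 3 := (Nat.prime_dvd_prime_iff_eq hq Nat.prime_three).mp
      (Int.ofNat_dvd.mp (hA q (hπq'.symm.dvd.trans hπA)))
    subst hq3
    exact absurd (by simpa using hπq'.prime hπ) not_prime_three

theorem exists_dvd_norm_eq {A : EisensteinInt} (hA : ∀ m : ℤ, (m : EisensteinInt) ∣ A → m ∣ 3)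
    (s : ℕ) (h : (s : ℤ) ∣ norm A) : ∃ p, p ∣ A ∧ norm p = s := by
  induction s using induction_on_primes generalizing A with
  | zero => exact ⟨A, dvd_rfl, by simpa using h⟩
  | one => exact ⟨1, one_dvd A, norm_one⟩
  | prime_mul q s hq ih =>
    push_cast at h
    obtain ⟨π, ⟨B, rfl⟩, hπ⟩ :=
      exists_dvd_norm_eq_prime hA hq (dvd_of_mul_right_dvd h)
    have hB : (s : ℤ) ∣ norm B := by
      rw [norm_mul, hπ] at h
      exact (mul_dvd_mul_iff_left (Int.natCast_ne_zero.mpr hq.ne_zero)).mp h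
    obtain ⟨p, hpB, hp⟩ := ih (fun m hm => hA m (hm.trans (dvd_mul_left B π))) hB
    exact ⟨π * p, mul_dvd_mul_left π hpB, by rw [norm_mul, hπ, hp]; push_cast; ring⟩

def associatePairs (a b : ℤ) : Set (ℤ × ℤ) :=
  {(a, b), (-a, -b), (b, -(a - b)), (-b, a - b), (a - b, a), (-(a - b), -a)}

theorem associated_iff_mem_associatePairs {a b c d : ℤ} :
    Associated (⟨a, b⟩ : EisensteinInt) ⟨c, d⟩ ↔ (c, d) ∈ associatePairs a b := by
  simp only [associatePairs, Set.mem_insert_iff, Set.mem_singleton_iff, Prod.mk.injEq]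
  constructor
  · rintro ⟨u, hu⟩
    rcases eq_of_norm_eq_one (isUnit_iff_norm_eq_one.mp u.isUnit) with h | h | h | h | h | h <;>
    · rw [h, EisensteinInt.ext_iff] at hu
      simp only [ω, mul_x, mul_y, add_x, add_y, neg_x, neg_y, one_x, one_y] at hu
      omega
  · have key : ∀ u : EisensteinInt, norm u = 1 → (⟨c, d⟩ : EisensteinInt) = ⟨a, b⟩ * u →
        Associated (⟨a, b⟩ : EisensteinInt) ⟨c, d⟩ := fun u hu h =>
      h ▸ associated_mul_unit_right _ u (isUnit_iff_norm_eq_one.mpr hu)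
    rintro (⟨rfl, rfl⟩ | ⟨rfl, rfl⟩ | ⟨rfl, rfl⟩ | ⟨rfl, rfl⟩ | ⟨rfl, rfl⟩ | ⟨rfl, rfl⟩)
    · exact key 1 rfl (by ext <;> simp)
    · exact key (-1) rfl (by ext <;> simp)
    · exact key (-ω) rfl (by ext <;> simp [ω])
    · exact key ω rfl (by ext <;> simp [ω])
    · exact key (1 + ω) rfl (by ext <;> simp [ω])
    · exact key (-(1 + ω)) rfl (by ext <;> simp [ω]; ring)

theorem ncard_associatePairs {a b : ℤ} (h : a ≠ 0 ∨ b ≠ 0) : (associatePairs a b).ncard = 6 := by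
  rw [associatePairs, Set.ncard_insert_of_notMem, Set.ncard_insert_of_notMem,
    Set.ncard_insert_of_notMem, Set.ncard_insert_of_notMem, Set.ncard_pair] <;>
  simp <;> omega

def lift {R : Type*} [CommRing R] (ζ : R) (hζ : ζ ^ 2 + ζ + 1 = 0) : EisensteinInt →+* R where
  toFun p := p.x + p.y * ζ
  map_one' := by simp
  map_mul' p q := by
    simp only [mul_x, mul_y, Int.cast_sub, Int.cast_mul, Int.cast_add]
    linear_combination (-(p.y * q.y : R)) * hζ
  map_zero' := by simp
  map_add' p q := by simp only [add_x, add_y, Int.cast_add]; ring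

theorem lift_injective {ζ : ℂ} (hζ : ζ ^ 2 + ζ + 1 = 0) : Function.Injective (lift ζ hζ) := by
  have him : ζ.im ≠ 0 := by
    intro h0
    have hre := congrArg Complex.re hζ
    simp only [pow_two, Complex.add_re, Complex.mul_re, h0, mul_zero, sub_zero, Complex.one_re,
      Complex.zero_re] at hre
    nlinarith [sq_nonneg (ζ.re + 1 / 2)]
  refine (injective_iff_map_eq_zero _).mpr fun p hp => ?_
  have hy : p.y = 0 := by
    have := congrArg Complex.im hp
    simpa [lift, him] using this
  have hx : p.x = 0 := by
    simpa [lift, hy] using hp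
  ext <;> simp [hx, hy]

theorem exists_lift_eq_mul_iff_dvd {ζ : ℂ} (hζ : ζ ^ 2 + ζ + 1 = 0) {p q : EisensteinInt} :
    (∃ x y : ℤ, lift ζ hζ q = lift ζ hζ p * (x + y * ζ)) ↔ p ∣ q := by
  constructor
  · rintro ⟨x, y, h⟩
    exact ⟨⟨x, y⟩, lift_injective hζ (by rw [map_mul]; exact h)⟩
  · rintro ⟨r, rfl⟩
    exact ⟨r.x, r.y, map_mul _ _ _⟩

def divisorPairsOfNorm (A : EisensteinInt) (s : ℤ) : Set (ℤ × ℤ) :=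
  {p | (⟨p.1, p.2⟩ : EisensteinInt) ∣ A ∧ norm ⟨p.1, p.2⟩ = s}

theorem divisorPairsOfNorm_eq_associatePairs {A : EisensteinInt}
    (hA : ∀ m : ℤ, (m : EisensteinInt) ∣ A → m ∣ 3) {s a b : ℤ}
    (h : (a, b) ∈ divisorPairsOfNorm A s) : divisorPairsOfNorm A s = associatePairs a b := by
  ext ⟨c, d⟩
  rw [← associated_iff_mem_associatePairs]
  exact ⟨fun hcd => associated_of_dvd_of_dvd_of_norm_eq hA h.1 hcd.1 (h.2.trans hcd.2.symm),
    fun hcd => ⟨hcd.symm.dvd.trans h.1, (norm_eq_of_associated hcd).symm.trans h.2⟩⟩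

theorem ncard_divisorPairsOfNorm {A : EisensteinInt}
    (hA : ∀ m : ℤ, (m : EisensteinInt) ∣ A → m ∣ 3) {s : ℤ} (hs : 0 < s) (h : s ∣ norm A) :
    (divisorPairsOfNorm A s).ncard = 6 := by
  lift s to ℕ using hs.le
  obtain ⟨p, hpA, hp⟩ := exists_dvd_norm_eq hA s h
  rw [divisorPairsOfNorm_eq_associatePairs hA (a := p.x) (b := p.y) ⟨hpA, hp⟩]
  refine ncard_associatePairs ?_
  by_contra! h0
  rw [show p = 0 from EisensteinInt.ext h0.1 h0.2, norm_eq_zero.mpr rfl] at hp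
  omega

end EisensteinInt

open EisensteinInt in
/-- Let `s > 0` divide `Δ_n = n² + 3n + 9` and let `ζ` be a primitive cube root
of unity, `A_n = n + 3(1+ζ)`. There are exactly `6` ordered pairs `(a₀, a₁)` of
integers with `s = a₀² - a₀a₁ + a₁²` and `a₀ + a₁ζ ∣ A_n` in `ℤ[ζ]`; and if
`(a₀, a₁)` is one of them, then the set of all of them is
`{(a₀,a₁), (-a₀,-a₁), (a₁,-(a₀-a₁)), (-a₁,a₀-a₁), (a₀-a₁,a₀), (-(a₀-a₁),-a₀)}`. -/
theorem stmt6 (n s : ℤ) (hs : 0 < s) (hdvd : s ∣ n ^ 2 + 3 * n + 9)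
    (ζ : ℂ) (hζ : IsPrimitiveRoot ζ 3) :
    {p : ℤ × ℤ | s = p.1 ^ 2 - p.1 * p.2 + p.2 ^ 2 ∧
        ∃ x y : ℤ, (n : ℂ) + 3 * (1 + ζ) =
          ((p.1 : ℂ) + p.2 * ζ) * ((x : ℂ) + y * ζ)}.ncard = 6 ∧
    ∀ a₀ a₁ : ℤ,
      (a₀, a₁) ∈ {p : ℤ × ℤ | s = p.1 ^ 2 - p.1 * p.2 + p.2 ^ 2 ∧
        ∃ x y : ℤ, (n : ℂ) + 3 * (1 + ζ) =
          ((p.1 : ℂ) + p.2 * ζ) * ((x : ℂ) + y * ζ)} →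
      {p : ℤ × ℤ | s = p.1 ^ 2 - p.1 * p.2 + p.2 ^ 2 ∧
        ∃ x y : ℤ, (n : ℂ) + 3 * (1 + ζ) =
          ((p.1 : ℂ) + p.2 * ζ) * ((x : ℂ) + y * ζ)} =
        {(a₀, a₁), (-a₀, -a₁), (a₁, -(a₀ - a₁)), (-a₁, a₀ - a₁),
          (a₀ - a₁, a₀), (-(a₀ - a₁), -a₀)} := by
  have hω : ζ ^ 2 + ζ + 1 = 0 := by
    simpa [Polynomial.cyclotomic_three] using hζ.isRoot_cyclotomic (by norm_num)
  set A : EisensteinInt := ⟨n + 3, 3⟩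
  have hA : ∀ m : ℤ, (m : EisensteinInt) ∣ A → m ∣ 3 := fun m hm => (intCast_dvd_iff.mp hm).2
  have hAζ : lift ζ hω A = n + 3 * (1 + ζ) := by
    show ((n + 3 : ℤ) : ℂ) + ((3 : ℤ) : ℂ) * ζ = _
    push_cast
    ring
  have hS : {p : ℤ × ℤ | s = p.1 ^ 2 - p.1 * p.2 + p.2 ^ 2 ∧
        ∃ x y : ℤ, (n : ℂ) + 3 * (1 + ζ) = ((p.1 : ℂ) + p.2 * ζ) * ((x : ℂ) + y * ζ)} =
      divisorPairsOfNorm A s := by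
    ext p
    simp only [divisorPairsOfNorm, Set.mem_ofPred_eq]
    rw [← exists_lift_eq_mul_iff_dvd hω, hAζ, and_comm, eq_comm]
    rfl
  rw [hS]
  refine ⟨ncard_divisorPairsOfNorm hA hs ?_, fun a₀ a₁ => divisorPairsOfNorm_eq_associatePairs hA⟩
  convert hdvd using 1
  simp only [EisensteinInt.norm, A]
  ring
end

section
/- Let n be an integer with 3 ∤ n or n ≡ 12 (mod 27), and let a₀, a₁, m and ε ∈ {±1} be the integers defined from Δ_n = de²c³ as above. Set α = (a₀ρ_n + a₁ρ_n' + m)/(ec²). Then the minimal polynomial over ℚ of ±α (a generator of a normal integral basis of L_n) is F_±(X) = X³ ∓ εX² + (1/(e²c⁴))(a₀a₁n² + 2(a₀+a₁)mn − ec(n+3) + 3m²)X ∓ (1/(e³c⁶))(a₀a₁mn² − a₀²a₁n(n+3) + (a₀+a₁)m²n − ecm(n+3) + a₀a₁(a₀−a₁)(n²+3n+6) + a₀³ + a₁³ + m³ − 3a₀²a₁), where the double signs are taken in the same order. -/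
/-!
Writing `α · ec² = (a₀ρ + a₁ρ') + m`, the element `a₀ρ + a₁ρ'` satisfies an explicit integral
cubic: reduce its evaluation modulo the Shanks polynomial, using `ρ' = ρ² - (n + 1)ρ - 2`.
Translating by `m`, scaling by `ec²`, and substituting `3m + n(a₀ + a₁) = εec²` and
`ec = a₀² - a₀a₁ + a₁²` turns this cubic into `F₊`. The Shanks polynomial has no integer root
(such a root would divide `1`), so it is irreducible over `ℚ` and `[L_n : ℚ] = 3` is prime.
Since `1, ρ, ρ²` are linearly independent and `(a₀, a₁) ≠ 0`, `α` is not rational, so the monic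
cubic `F₊` it annihilates is its minimal polynomial; `F₋(X) = -F₊(-X)` handles `-α`.
-/

open NumberField Polynomial

/-- `α` is a generator of a normal integral basis of `K`:
its Galois conjugates `σ(α)` form a `ℤ`-basis of the ring of integers of `K`. -/
def IsNIBGen (K : Type*) [Field K] [NumberField K] (α : K) : Prop :=
  ∃ b : Module.Basis (K ≃ₐ[ℚ] K) ℤ (𝓞 K), ∀ σ : K ≃ₐ[ℚ] K, (b σ : K) = σ α

noncomputable def shanksPoly {R : Type*} [CommRing R] (n : R) : R[X] :=
  X ^ 3 - C n * X ^ 2 - C (n + 3) * X - 1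

section ShanksPoly

variable {R : Type*} [CommRing R]

theorem shanksPoly_monic [Nontrivial R] (n : R) : (shanksPoly n).Monic := by
  unfold shanksPoly; monicity!

theorem natDegree_shanksPoly [Nontrivial R] (n : R) : (shanksPoly n).natDegree = 3 := by
  unfold shanksPoly; compute_degree!

@[simp]
theorem aeval_shanksPoly {A : Type*} [CommRing A] [Algebra R A] (n : R) (x : A) :
    aeval x (shanksPoly n) =
      x ^ 3 - algebraMap R A n * x ^ 2 - (algebraMap R A n + 3) * x - 1 := by
  simp [shanksPoly, map_ofNat]

theorem map_shanksPoly {S : Type*} [CommRing S] (f : R →+* S) (n : R) :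
    (shanksPoly n).map f = shanksPoly (f n) := by
  simp [shanksPoly, map_ofNat]

end ShanksPoly

theorem shanks_eval_int_ne_zero (n r : ℤ) : r ^ 3 - n * r ^ 2 - (n + 3) * r - 1 ≠ 0 := by
  intro h
  have hr : r ∣ 1 := ⟨r ^ 2 - n * r - (n + 3), by linear_combination -h⟩
  rcases Int.isUnit_iff.mp (isUnit_of_dvd_one hr) with rfl | rfl <;> omega

theorem shanksPoly_irreducible (n : ℤ) : Irreducible (shanksPoly (n : ℚ)) := by
  rw [irreducible_iff_roots_eq_zero_of_degree_le_three (by simp [natDegree_shanksPoly])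
    (by simp [natDegree_shanksPoly]), Multiset.eq_zero_iff_forall_notMem]
  intro r hr
  have hroot : aeval r (shanksPoly n) = 0 := by
    rw [aeval_def, eval₂_eq_eval_map, map_shanksPoly]
    exact (mem_roots (shanksPoly_monic _).ne_zero).mp hr
  obtain ⟨k, rfl, -⟩ := exists_integer_of_is_root_of_monic (shanksPoly_monic (n : ℤ)) hroot
  simp only [aeval_shanksPoly, eq_intCast] at hroot
  exact shanks_eval_int_ne_zero n k (by exact_mod_cast hroot)

section ShanksRoot

variable {K : Type*} [Field K] [CharZero K] {n : ℤ} {ρ : K}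

theorem minpoly_eq_shanksPoly (hρ : ρ ^ 3 - n * ρ ^ 2 - (n + 3) * ρ - 1 = 0) :
    minpoly ℚ ρ = shanksPoly (n : ℚ) :=
  (minpoly.eq_of_irreducible_of_monic (shanksPoly_irreducible n) (by simpa using hρ)
    (shanksPoly_monic _)).symm

theorem finrank_eq_three_of_shanks (hρ : ρ ^ 3 - n * ρ ^ 2 - (n + 3) * ρ - 1 = 0)
    (hgen : Algebra.adjoin ℚ {ρ} = ⊤) : Module.finrank ℚ K = 3 := by
  have hint : IsIntegral ℚ ρ :=
    ⟨_, shanksPoly_monic (n : ℚ), by simpa [← aeval_def] using hρ⟩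
  rw [(PowerBasis.ofAdjoinEqTop hint hgen).finrank, PowerBasis.ofAdjoinEqTop_dim,
    minpoly_eq_shanksPoly hρ, natDegree_shanksPoly]

end ShanksRoot

theorem minpoly_eq_of_finrank_prime {F L : Type*} [Field F] [Field L] [Algebra F L]
    [FiniteDimensional F L] (hprime : (Module.finrank F L).Prime) {x : L}
    (hx : x ∉ (algebraMap F L).range) {p : F[X]} (hmonic : p.Monic)
    (hdeg : p.natDegree = Module.finrank F L) (hp : aeval x p = 0) : minpoly F x = p := by
  have hint : IsIntegral F x := .of_finite F x
  have hminDeg : (minpoly F x).natDegree = Module.finrank F L :=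
    (hprime.eq_one_or_self_of_dvd _ (minpoly.degree_dvd hint)).resolve_left
      (mt minpoly.natDegree_eq_one_iff.mp hx)
  exact (eq_of_monic_of_dvd_of_natDegree_le (minpoly.monic hint) hmonic (minpoly.dvd F x hp)
    (by rw [hdeg, hminDeg])).symm

theorem minpoly_neg_of_eq_cubic {F A : Type*} [Field F] [Ring A] [Algebra F A] {x : A}
    {a b c : F} (h : minpoly F x = X ^ 3 - C a * X ^ 2 + C b * X - C c) :
    minpoly F (-x) = X ^ 3 + C a * X ^ 2 + C b * X + C c := by
  have hdeg : (X ^ 3 - C a * X ^ 2 + C b * X - C c).natDegree = 3 := by compute_degree!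
  rw [minpoly.neg, h, hdeg]
  simp only [sub_comp, add_comp, mul_comp, pow_comp, X_comp, C_comp]
  ring

theorem eq_zero_of_quadratic_eq_zero {F A : Type*} [Field F] [Ring A] [Algebra F A] {x : A}
    (hx : 2 < (minpoly F x).degree) {a b c : F}
    (h : algebraMap F A a * x ^ 2 + algebraMap F A b * x + algebraMap F A c = 0) :
    a = 0 ∧ b = 0 ∧ c = 0 := by
  set p : F[X] := C a * X ^ 2 + C b * X + C c
  have hp : p = 0 := by
    by_contra hp
    have hle := minpoly.degree_le_of_ne_zero F x hp (by simpa [p] using h)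
    have hp2 : p.degree ≤ 2 := by unfold p; compute_degree
    exact (hx.trans_le (hle.trans hp2)).false
  refine ⟨?_, ?_, ?_⟩
  · simpa [p] using congrArg (coeff · 2) hp
  · simpa [p] using congrArg (coeff · 1) hp
  · simpa [p] using congrArg (coeff · 0) hp

theorem shanks_next_root_eq {K : Type*} [Field K] {n ρ : K}
    (hρ : ρ ^ 3 - n * ρ ^ 2 - (n + 3) * ρ - 1 = 0) :
    -1 / (1 + ρ) = ρ ^ 2 - (n + 1) * ρ - 2 := by
  have h1ρ : 1 + ρ ≠ 0 := fun h ↦ by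
    rw [eq_neg_of_add_eq_zero_right h] at hρ
    exact one_ne_zero (by linear_combination hρ : (1 : K) = 0)
  field_simp
  linear_combination -hρ

/-- The coefficients are the elementary symmetric functions of the three conjugates
`a₀ρ + a₁ρ'`, `a₀ρ' + a₁ρ''`, `a₀ρ'' + a₁ρ`, computed from `ρ + ρ' + ρ'' = n`,
`ρρ' + ρ'ρ'' + ρ''ρ = -(n + 3)` and `ρρ'ρ'' = 1`. -/
theorem shanks_comb_cubic {R : Type*} [CommRing R] {n ρ ρ' : R}
    (hρ : ρ ^ 3 - n * ρ ^ 2 - (n + 3) * ρ - 1 = 0) (hρ' : ρ' = ρ ^ 2 - (n + 1) * ρ - 2)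
    (a₀ a₁ : R) :
    (a₀ * ρ + a₁ * ρ') ^ 3 - n * (a₀ + a₁) * (a₀ * ρ + a₁ * ρ') ^ 2
      + (a₀ * a₁ * n ^ 2 - (a₀ ^ 2 - a₀ * a₁ + a₁ ^ 2) * (n + 3)) * (a₀ * ρ + a₁ * ρ')
      - (a₀ * a₁ * (a₀ - a₁) * (n ^ 2 + 3 * n + 6) - a₀ ^ 2 * a₁ * n * (n + 3)
        + a₀ ^ 3 + a₁ ^ 3 - 3 * a₀ ^ 2 * a₁) = 0 := by
  subst hρ'
  linear_combination (a₁ ^ 3 * ρ ^ 3 + a₁ ^ 2 * (3 * a₀ - (2 * n + 3) * a₁) * ρ ^ 2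
    + a₁ * (3 * a₀ ^ 2 - (4 * n + 6) * a₀ * a₁ + n * (n + 3) * a₁ ^ 2) * ρ
    + (a₀ ^ 3 - (2 * n + 3) * a₀ ^ 2 * a₁ + n * (n + 3) * a₀ * a₁ ^ 2
      + (2 * n + 3) * a₁ ^ 3)) * hρ

theorem cubic_eq_zero_of_affine {K : Type*} [Field K] {y m w z s t u ε A B : K}
    (hy : y ^ 3 - s * y ^ 2 + t * y - u = 0) (hw : w ≠ 0) (hz : z * w = y + m)
    (hε : ε * w = 3 * m + s) (hA : A * w ^ 2 = 3 * m ^ 2 + 2 * s * m + t)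
    (hB : B * w ^ 3 = m ^ 3 + s * m ^ 2 + t * m + u) :
    z ^ 3 - ε * z ^ 2 + A * z - B = 0 := by
  apply mul_left_cancel₀ (pow_ne_zero 3 hw)
  linear_combination hy + ((z * w) ^ 2 + z * w * (y + m) + (y + m) ^ 2
    - (3 * m + s) * (z * w + y + m) + 3 * m ^ 2 + 2 * s * m + t) * hz
    - (z * w) ^ 2 * hε + z * w * hA - hB

theorem shanks_comb_notMem_range {K : Type*} [Field K] [CharZero K] {n : ℤ} {ρ ρ' : K}
    (hρ : ρ ^ 3 - n * ρ ^ 2 - (n + 3) * ρ - 1 = 0) (hρ' : ρ' = ρ ^ 2 - (n + 1) * ρ - 2)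
    {a₀ a₁ : ℤ} (ha : a₀ ≠ 0 ∨ a₁ ≠ 0) :
    (a₀ * ρ + a₁ * ρ' : K) ∉ (algebraMap ℚ K).range := by
  rintro ⟨r, hr⟩
  rw [eq_ratCast] at hr
  have hdeg : 2 < (minpoly ℚ ρ).degree := by
    rw [minpoly_eq_shanksPoly hρ, degree_eq_natDegree (shanksPoly_monic _).ne_zero,
      natDegree_shanksPoly]
    norm_num
  obtain ⟨h₂, h₁, -⟩ := eq_zero_of_quadratic_eq_zero hdeg (a := a₁) (b := a₀ - a₁ * (n + 1))
    (c := -2 * a₁ - r) (by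
      simp only [map_sub, map_mul, map_add, map_neg, map_one, map_ofNat, map_intCast, eq_ratCast]
      linear_combination -hr - (a₁ : K) * hρ')
  have ha₁ : a₁ = 0 := by exact_mod_cast h₂
  subst ha₁
  have ha₀ : a₀ = 0 := by simpa using h₁
  simp [ha₀] at ha

theorem stmt13_general (n : ℤ) (e c : ℤ) (he : 0 < e) (hc : 0 < c)
    (a₀ a₁ : ℤ) (ha : e * c = a₀ ^ 2 - a₀ * a₁ + a₁ ^ 2)
    (ε : ℤ)
    (m : ℤ) (hm : 3 * m = ε * e * c ^ 2 - n * (a₀ + a₁))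
    (K : Type*) [Field K] [NumberField K]
    (ρ ρ' : K) (hρ : ρ ^ 3 - n * ρ ^ 2 - (n + 3) * ρ - 1 = 0)
    (hgen : Algebra.adjoin ℚ {ρ} = ⊤)
    (hρ' : ρ' = -1 / (1 + ρ))
    (α : K) (hα : α = ((a₀ : K) * ρ + a₁ * ρ' + m) / (e * c ^ 2))
    (A B : ℚ)
    (hA : A = ((a₀ * a₁ * n ^ 2 + 2 * (a₀ + a₁) * m * n - e * c * (n + 3)
        + 3 * m ^ 2 : ℤ) : ℚ) / ((e ^ 2 * c ^ 4 : ℤ) : ℚ))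
    (hB : B = ((a₀ * a₁ * m * n ^ 2 - a₀ ^ 2 * a₁ * n * (n + 3)
        + (a₀ + a₁) * m ^ 2 * n - e * c * m * (n + 3)
        + a₀ * a₁ * (a₀ - a₁) * (n ^ 2 + 3 * n + 6)
        + a₀ ^ 3 + a₁ ^ 3 + m ^ 3 - 3 * a₀ ^ 2 * a₁ : ℤ) : ℚ)
        / ((e ^ 3 * c ^ 6 : ℤ) : ℚ)) :
    minpoly ℚ α = X ^ 3 - C (ε : ℚ) * X ^ 2 + C A * X - C B ∧
    minpoly ℚ (-α) = X ^ 3 + C (ε : ℚ) * X ^ 2 + C A * X + C B := by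
  have hρ'' : ρ' = ρ ^ 2 - (n + 1) * ρ - 2 := hρ'.trans (shanks_next_root_eq hρ)
  have he' : (e : K) ≠ 0 := by exact_mod_cast he.ne'
  have hc' : (c : K) ≠ 0 := by exact_mod_cast hc.ne'
  have hw : (e * c ^ 2 : K) ≠ 0 := mul_ne_zero he' (pow_ne_zero _ hc')
  have haK : (e * c : K) = a₀ ^ 2 - a₀ * a₁ + a₁ ^ 2 := by exact_mod_cast ha
  have hz : α * (e * c ^ 2) = (a₀ * ρ + a₁ * ρ') + m := by rw [hα, div_mul_cancel₀ _ hw]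
  have hroot : α ^ 3 - ε * α ^ 2 + A * α - B = 0 := by
    refine cubic_eq_zero_of_affine (shanks_comb_cubic hρ hρ'' a₀ a₁) hw hz ?_ ?_ ?_
    · exact_mod_cast (by linear_combination -hm : ε * (e * c ^ 2) = 3 * m + n * (a₀ + a₁))
    · rw [hA]; push_cast; field_simp; linear_combination -(n + 3 : K) * haK
    · rw [hB]; push_cast; field_simp; linear_combination -(m * (n + 3) : K) * haK
  have hab : a₀ ≠ 0 ∨ a₁ ≠ 0 := by
    by_contra! h
    obtain ⟨rfl, rfl⟩ := h
    nlinarith [mul_pos he hc]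
  have hirr : α ∉ (algebraMap ℚ K).range := by
    rintro ⟨r, rfl⟩
    refine shanks_comb_notMem_range hρ hρ'' hab ⟨r * (e * c ^ 2) - m, ?_⟩
    simp only [map_sub, map_mul, map_pow, map_intCast]
    linear_combination hz
  have hfin := finrank_eq_three_of_shanks hρ hgen
  have hmin : minpoly ℚ α = X ^ 3 - C (ε : ℚ) * X ^ 2 + C A * X - C B :=
    minpoly_eq_of_finrank_prime (hfin ▸ Nat.prime_three) hirr (by monicity!)
      (by rw [hfin]; compute_degree!) (by simpa using hroot)
  exact ⟨hmin, minpoly_neg_of_eq_cubic hmin⟩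

/-- The minimal polynomial over `ℚ` of `±α`, where
`α = (a₀ρ + a₁ρ' + m)/(ec²)` is the generator of a normal integral basis of
the simplest cubic field `L_n`, is
`F_±(X) = X³ ∓ εX² + ((a₀a₁n² + 2(a₀+a₁)mn - ec(n+3) + 3m²)/(e²c⁴))X
∓ (a₀a₁mn² - a₀²a₁n(n+3) + (a₀+a₁)m²n - ecm(n+3) + a₀a₁(a₀-a₁)(n²+3n+6)
+ a₀³ + a₁³ + m³ - 3a₀²a₁)/(e³c⁶)`. -/
theorem stmt13 (n : ℤ) (d e c : ℤ) (hd : 0 < d) (he : 0 < e) (hc : 0 < c)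
    (hdsf : Squarefree d) (hesf : Squarefree e) (hde : IsCoprime d e)
    (hΔ : n ^ 2 + 3 * n + 9 = d * e ^ 2 * c ^ 3)
    (h3 : ¬ (3 ∣ n) ∨ n % 27 = 12)
    (ζ : ℂ) (hζ : IsPrimitiveRoot ζ 3)
    (a₀ a₁ : ℤ) (ha : e * c = a₀ ^ 2 - a₀ * a₁ + a₁ ^ 2)
    (hdvd : ∃ x y : ℤ, (n : ℂ) + 3 * (1 + ζ) =
      ((a₀ : ℂ) + a₁ * ζ) * ((x : ℂ) + y * ζ))
    (ε : ℤ) (hε : ε = 1 ∨ ε = -1)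
    (hε₁ : ¬ (3 ∣ n) → (3 : ℤ) ∣ ε - n * (a₀ + a₁))
    (hε₂ : n % 27 = 12 → (3 : ℤ) ∣ ε - a₀)
    (m : ℤ) (hm : 3 * m = ε * e * c ^ 2 - n * (a₀ + a₁))
    (K : Type*) [Field K] [NumberField K]
    (ρ ρ' : K) (hρ : ρ ^ 3 - n * ρ ^ 2 - (n + 3) * ρ - 1 = 0)
    (hgen : Algebra.adjoin ℚ {ρ} = ⊤)
    (hρ' : ρ' = -1 / (1 + ρ))
    (α : K) (hα : α = ((a₀ : K) * ρ + a₁ * ρ' + m) / (e * c ^ 2))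
    (A B : ℚ)
    (hA : A = ((a₀ * a₁ * n ^ 2 + 2 * (a₀ + a₁) * m * n - e * c * (n + 3)
        + 3 * m ^ 2 : ℤ) : ℚ) / ((e ^ 2 * c ^ 4 : ℤ) : ℚ))
    (hB : B = ((a₀ * a₁ * m * n ^ 2 - a₀ ^ 2 * a₁ * n * (n + 3)
        + (a₀ + a₁) * m ^ 2 * n - e * c * m * (n + 3)
        + a₀ * a₁ * (a₀ - a₁) * (n ^ 2 + 3 * n + 6)
        + a₀ ^ 3 + a₁ ^ 3 + m ^ 3 - 3 * a₀ ^ 2 * a₁ : ℤ) : ℚ)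
        / ((e ^ 3 * c ^ 6 : ℤ) : ℚ)) :
    minpoly ℚ α = X ^ 3 - C (ε : ℚ) * X ^ 2 + C A * X - C B ∧
    minpoly ℚ (-α) = X ^ 3 + C (ε : ℚ) * X ^ 2 + C A * X + C B :=
  stmt13_general n e c he hc a₀ a₁ ha ε m hm K ρ ρ' hρ hgen hρ' α hα A B hA hB
end
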